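/- arXiv:1105.5313 — 3 statements merged into one kernel-verified Lean document; each statement's English description precedes it below -/
import Mathlib

section
/- The 0-Hecke monoid H_n is J-trivial: if two elements a, b of H_n generate the same two-sided ideal (i.e. H_n a H_n = H_n b H_n), then a = b. -/
open Pointwise

/-- The simple transposition `(i, i+1)` in the symmetric group on `Fin n`. -/
def simpleT {n : ℕ} (i : Fin (n - 1)) : Equiv.Perm (Fin n) :=
  Equiv.swap ⟨i.1, by have := i.2; omega⟩ ⟨i.1 + 1, by have := i.2; omega⟩

/-- Defining relations of the 0-Hecke monoid. -/
def heckeRels (n : ℕ) : Set (FreeMonoid (Fin (n - 1)) × FreeMonoid (Fin (n - 1))) :=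
  {p | (∃ i, p = (FreeMonoid.of i * FreeMonoid.of i, FreeMonoid.of i)) ∨
       (∃ i j, i.1 + 2 ≤ j.1 ∧
          p = (FreeMonoid.of i * FreeMonoid.of j, FreeMonoid.of j * FreeMonoid.of i)) ∨
       (∃ i j, j.1 = i.1 + 1 ∧
          p = (FreeMonoid.of i * FreeMonoid.of j * FreeMonoid.of i,
               FreeMonoid.of j * FreeMonoid.of i * FreeMonoid.of j))}

/-- The congruence on the free monoid generated by the 0-Hecke relations. -/
def heckeCon (n : ℕ) : Con (FreeMonoid (Fin (n - 1))) :=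
  conGen (fun a b => (a, b) ∈ heckeRels n)

/-- The 0-Hecke monoid `H_n`. -/
abbrev Hecke (n : ℕ) := (heckeCon n).Quotient

/-- The generator `e_i` of the 0-Hecke monoid. -/
def heckeGen (n : ℕ) (i : Fin (n - 1)) : Hecke n := (heckeCon n).mk' (FreeMonoid.of i)

/-- Binary relations on `Fin n` (equivalently, `n × n` Boolean matrices),
with `ξ i j` meaning the `(i,j)` entry is `1`. -/
abbrev BRel (n : ℕ) := Fin n → Fin n → Prop

/-- The monoid of binary relations / Boolean matrices, under relational
composition (= Boolean matrix multiplication). -/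
instance BRel.instMonoid (n : ℕ) : Monoid (BRel n) where
  mul r s := fun i j => ∃ k, r i k ∧ s k j
  one := fun i j => i = j
  mul_assoc r s t := by
    funext i j
    show (∃ k, (∃ m, r i m ∧ s m k) ∧ t k j) = (∃ m, r i m ∧ ∃ k, s m k ∧ t k j)
    apply propext; tauto
  one_mul r := by
    funext i j
    show (∃ k, i = k ∧ r k j) = r i j
    apply propext
    constructor
    · rintro ⟨k, rfl, h⟩; exact h
    · intro h; exact ⟨i, rfl, h⟩
  mul_one r := by
    funext i j
    show (∃ k, r i k ∧ k = j) = r i j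
    apply propext
    constructor
    · rintro ⟨k, h, rfl⟩; exact h
    · intro h; exact ⟨j, h, rfl⟩

theorem BRel.mul_def {n : ℕ} (r s : BRel n) (i j : Fin n) :
    (r * s) i j ↔ ∃ k, r i k ∧ s k j := Iff.rfl

theorem BRel.one_def {n : ℕ} (i j : Fin n) : (1 : BRel n) i j ↔ i = j := Iff.rfl

/-- The generator `ε_i = Φ(id) + Φ(s_i)` of the double Catalan monoid:
the identity matrix plus extra `1` entries at `(i, i+1)` and `(i+1, i)`. -/
def eps {n : ℕ} (i : Fin (n - 1)) : BRel n := fun a b => a = b ∨ a = simpleT i b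

/-- The double Catalan monoid `DC_n`, the submonoid of Boolean matrices
generated by the `ε_i`. -/
def DC (n : ℕ) : Submonoid (BRel n) := Submonoid.closure (Set.range (eps (n := n)))

open Classical in
/-- `max(ξ)(j)` : the largest row index `i` with `ξ i j` (for a reflexive
relation; the diagonal element `j` is thrown in to guarantee nonemptiness). -/
noncomputable def maxF {n : ℕ} (ξ : BRel n) (j : Fin n) : Fin n :=
  (insert j (Finset.univ.filter fun i => ξ i j)).max' (Finset.insert_nonempty _ _)

open Classical in
/-- `min(ξ)(j)` : the smallest row index `i` with `ξ i j`. -/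
noncomputable def minF {n : ℕ} (ξ : BRel n) (j : Fin n) : Fin n :=
  (insert j (Finset.univ.filter fun i => ξ i j)).min' (Finset.insert_nonempty _ _)

/-- A set of `Fin n` is an interval of consecutive integers. -/
def IsIntervalSet {n : ℕ} (S : Set (Fin n)) : Prop :=
  ∀ ⦃a b c : Fin n⦄, a ≤ b → b ≤ c → a ∈ S → c ∈ S → b ∈ S

/-- A binary relation is convex if it is reflexive and all its rows and
columns are intervals. -/
def IsConvexRel {n : ℕ} (ξ : BRel n) : Prop :=
  (∀ i, ξ i i) ∧ (∀ j, IsIntervalSet {i | ξ i j}) ∧ (∀ j, IsIntervalSet {i | ξ j i})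

/-- The left-to-right maximum function `α_w`. -/
def lrMax {n : ℕ} (w : Equiv.Perm (Fin n)) (j : Fin n) : Fin n :=
  (Finset.Iic j).sup' ⟨j, Finset.mem_Iic.2 le_rfl⟩ (fun k => w k)

/-- The right-to-left minimum function `β_w`. -/
def rlMin {n : ℕ} (w : Equiv.Perm (Fin n)) (j : Fin n) : Fin n :=
  (Finset.Ici j).inf' ⟨j, Finset.mem_Ici.2 le_rfl⟩ (fun k => w k)

/-- The Boolean matrix `Ψ(z_w)`, the image of `w` in the double Catalan
monoid: the `(i,j)` entry is `1` iff `β_w(j) ≤ i ≤ α_w(j)`. -/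
def psiMat {n : ℕ} (w : Equiv.Perm (Fin n)) : BRel n :=
  fun i j => rlMin w j ≤ i ∧ i ≤ lrMax w j

/-- `l` is a reduced word for the permutation `w`. -/
def IsRedWord {n : ℕ} (w : Equiv.Perm (Fin n)) (l : List (Fin (n - 1))) : Prop :=
  (l.map simpleT).prod = w ∧
    ∀ l' : List (Fin (n - 1)), (l'.map simpleT).prod = w → l.length ≤ l'.length

/-- The Bruhat order on the symmetric group, via the subword property. -/
def bruhatLE {n : ℕ} (u w : Equiv.Perm (Fin n)) : Prop :=
  ∃ lw, IsRedWord w lw ∧ ∃ lu, lu.Sublist lw ∧ IsRedWord u lu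

/-- `w` is 321-avoiding. -/
def Avoids321 {n : ℕ} (w : Equiv.Perm (Fin n)) : Prop :=
  ¬ ∃ i j k : Fin n, i < j ∧ j < k ∧ w k < w j ∧ w j < w i

/-- `w` is 312-avoiding. -/
def Avoids312 {n : ℕ} (w : Equiv.Perm (Fin n)) : Prop :=
  ¬ ∃ i j k : Fin n, i < j ∧ j < k ∧ w j < w k ∧ w k < w i

/-- `w` is 4321-avoiding. -/
def Avoids4321 {n : ℕ} (w : Equiv.Perm (Fin n)) : Prop :=
  ¬ ∃ i j k l : Fin n, i < j ∧ j < k ∧ k < l ∧ w l < w k ∧ w k < w j ∧ w j < w i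

/-- The monoid `C_n^+` of order-preserving non-decreasing transformations. -/
def Cplus (n : ℕ) : Submonoid (Function.End (Fin n)) where
  carrier := {f | Monotone f ∧ ∀ i, i ≤ f i}
  one_mem' := ⟨monotone_id, fun _ => le_rfl⟩
  mul_mem' := by
    rintro f g ⟨hf1, hf2⟩ ⟨hg1, hg2⟩
    exact ⟨hf1.comp hg1, fun i => (hg2 i).trans (hf2 (g i))⟩

/-- The monoid `C_n^-` of order-preserving non-increasing transformations. -/
def Cminus (n : ℕ) : Submonoid (Function.End (Fin n)) where
  carrier := {f | Monotone f ∧ ∀ i, f i ≤ i}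
  one_mem' := ⟨monotone_id, fun _ => le_rfl⟩
  mul_mem' := by
    rintro f g ⟨hf1, hf2⟩ ⟨hg1, hg2⟩
    exact ⟨hf1.comp hg1, fun i => (hf2 (g i)).trans (hg2 i)⟩


/-!
`H_n` acts on the right of `S_n` by Demazure multiplication: `e_i` sends `w` to `w s_i` when this
adds an inversion and fixes `w` otherwise. The orbit map `x ↦ 1 · x` is injective, because the
element of `H_n` read off a canonical reduced word of `w` is compatible with the action (a form of
Matsumoto's theorem, proved by induction on the number of inversions using the braid relations).
Left Demazure multiplications commute with this right action, and every `w` is obtained from `1`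
by left Demazure multiplications; since all these operations can only add inversions,
`1 · (u b v)` has at least as many inversions as `1 · b`, with equality only if the two are equal.
Applied in both directions to `a ∈ H_n b H_n` and `b ∈ H_n a H_n` this gives `1 · a = 1 · b`.
-/

namespace ZeroHecke

open Finset

variable {n : ℕ}

section SimpleTranspositions

def lo (i : Fin (n - 1)) : Fin n := ⟨i, by omega⟩

def hi (i : Fin (n - 1)) : Fin n := ⟨i + 1, by omega⟩

variable {i j : Fin (n - 1)}

theorem simpleT_eq_swap (i : Fin (n - 1)) : simpleT i = Equiv.swap (lo i) (hi i) := rfl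

theorem lo_lt_hi (i : Fin (n - 1)) : lo i < hi i := Nat.lt_succ_self _

@[simp] theorem simpleT_lo (i : Fin (n - 1)) : simpleT i (lo i) = hi i :=
  Equiv.swap_apply_left _ _

@[simp] theorem simpleT_hi (i : Fin (n - 1)) : simpleT i (hi i) = lo i :=
  Equiv.swap_apply_right _ _

theorem simpleT_apply_of_val_ne {x : Fin n} (h₁ : x.1 ≠ i.1) (h₂ : x.1 ≠ i.1 + 1) :
    simpleT i x = x :=
  Equiv.swap_apply_of_ne_of_ne (Fin.ne_of_val_ne h₁) (Fin.ne_of_val_ne h₂)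

@[simp] theorem simpleT_mul_self (i : Fin (n - 1)) : simpleT i * simpleT i = 1 :=
  Equiv.swap_mul_self _ _

@[simp] theorem simpleT_inv (i : Fin (n - 1)) : (simpleT i)⁻¹ = simpleT i :=
  Equiv.swap_inv _ _

@[simp] theorem simpleT_symm (i : Fin (n - 1)) : (simpleT i).symm = simpleT i :=
  Equiv.symm_swap _ _

@[simp] theorem simpleT_simpleT (i : Fin (n - 1)) (x : Fin n) : simpleT i (simpleT i x) = x :=
  Equiv.swap_apply_self _ _ _

theorem mul_simpleT_mul_simpleT (w : Equiv.Perm (Fin n)) (i : Fin (n - 1)) :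
    w * simpleT i * simpleT i = w := by
  rw [mul_assoc, simpleT_mul_self, mul_one]

theorem simpleT_lt_simpleT {x y : Fin n} (hxy : x < y) (h : ¬(x = lo i ∧ y = hi i)) :
    simpleT i x < simpleT i y := by
  rw [simpleT_eq_swap, Equiv.swap_apply_def, Equiv.swap_apply_def]
  simp only [Fin.ext_iff, lo, hi, not_and] at h ⊢
  split_ifs <;> simp only [Fin.lt_def] at * <;> omega

def Far (i j : Fin (n - 1)) : Prop := i.1 + 2 ≤ j.1 ∨ j.1 + 2 ≤ i.1

theorem Far.symm (h : Far i j) : Far j i := Or.symm h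

theorem simpleT_lo_of_far (h : Far i j) : simpleT j (lo i) = lo i := by
  have := j.2
  unfold Far at h
  exact simpleT_apply_of_val_ne (by simp [lo]; omega) (by simp [lo]; omega)

theorem simpleT_hi_of_far (h : Far i j) : simpleT j (hi i) = hi i := by
  have := j.2
  unfold Far at h
  exact simpleT_apply_of_val_ne (by simp [hi]; omega) (by simp [hi]; omega)

theorem lo_eq_hi_of_adj (h : j.1 = i.1 + 1) : lo j = hi i := Fin.ext h

theorem simpleT_hi_of_adj (h : j.1 = i.1 + 1) : simpleT i (hi j) = hi j :=
  simpleT_apply_of_val_ne (by simp [hi]; omega) (by simp [hi]; omega)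

theorem simpleT_lo_of_adj (h : j.1 = i.1 + 1) : simpleT j (lo i) = lo i :=
  simpleT_apply_of_val_ne (by simp [lo]; omega) (by simp [lo]; omega)

theorem simpleT_hi_eq_hi_of_adj (h : j.1 = i.1 + 1) : simpleT j (hi i) = hi j := by
  rw [← lo_eq_hi_of_adj h, simpleT_lo]

theorem simpleT_comm (h : Far i j) : simpleT i * simpleT j = simpleT j * simpleT i := by
  have key := Equiv.swap_apply_apply (simpleT i) (lo j) (hi j)
  rw [simpleT_lo_of_far h.symm, simpleT_hi_of_far h.symm, ← simpleT_eq_swap, simpleT_inv] at key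
  calc simpleT i * simpleT j = simpleT i * simpleT j * simpleT i * simpleT i :=
        (mul_simpleT_mul_simpleT _ _).symm
    _ = simpleT j * simpleT i := by rw [← key]

theorem simpleT_braid (h : j.1 = i.1 + 1) :
    simpleT i * simpleT j * simpleT i = simpleT j * simpleT i * simpleT j := by
  have ki := Equiv.swap_apply_apply (simpleT i) (lo j) (hi j)
  rw [lo_eq_hi_of_adj h, simpleT_hi, simpleT_hi_of_adj h, ← lo_eq_hi_of_adj h,
    ← simpleT_eq_swap, simpleT_inv] at ki
  have kj := Equiv.swap_apply_apply (simpleT j) (lo i) (hi i)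
  rw [simpleT_lo_of_adj h, simpleT_hi_eq_hi_of_adj h, ← simpleT_eq_swap, simpleT_inv] at kj
  exact ki.symm.trans kj

end SimpleTranspositions

section Inversions

def inversionSet (w : Equiv.Perm (Fin n)) : Finset (Fin n × Fin n) :=
  {p | p.1 < p.2 ∧ w p.2 < w p.1}

def inversions (w : Equiv.Perm (Fin n)) : ℕ := #(inversionSet w)

theorem mem_inversionSet {w : Equiv.Perm (Fin n)} {p : Fin n × Fin n} :
    p ∈ inversionSet w ↔ p.1 < p.2 ∧ w p.2 < w p.1 := by
  simp [inversionSet]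

theorem inversions_inv (w : Equiv.Perm (Fin n)) : inversions w⁻¹ = inversions w :=
  Finset.card_equiv ((Equiv.prodComm _ _).trans (w⁻¹.prodCongr w⁻¹)) fun p => by
    simp [mem_inversionSet, and_comm]

theorem inversions_lt_mul_simpleT {w : Equiv.Perm (Fin n)} {i : Fin (n - 1)}
    (h : w (lo i) < w (hi i)) : inversions w < inversions (w * simpleT i) := by
  let σ := (simpleT i).prodCongr (simpleT i)
  calc inversions w = #((inversionSet w).map σ.toEmbedding) := (Finset.card_map _).symm
    _ < inversions (w * simpleT i) := by
      refine Finset.card_lt_card <| (Finset.ssubset_iff_of_subset ?_).2 ⟨(lo i, hi i), ?_, ?_⟩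
      · intro p hp
        simp only [Finset.mem_map_equiv, mem_inversionSet, σ, Equiv.prodCongr_symm,
          Equiv.prodCongr_apply, simpleT_symm, Prod.map_fst, Prod.map_snd] at hp ⊢
        have hne : ¬(simpleT i p.1 = lo i ∧ simpleT i p.2 = hi i) := fun ⟨h₁, h₂⟩ => by
          rw [h₁, h₂] at hp; exact hp.2.not_gt h
        simpa using And.intro (simpleT_lt_simpleT hp.1 hne) hp.2
      · simpa [mem_inversionSet] using ⟨lo_lt_hi i, h⟩
      · simp [σ, mem_inversionSet, (lo_lt_hi i).not_gt]

end Inversions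

section Descents

variable {w : Equiv.Perm (Fin n)} {i j : Fin (n - 1)}

def IsDescent (w : Equiv.Perm (Fin n)) (i : Fin (n - 1)) : Prop := w (hi i) < w (lo i)

theorem not_isDescent_iff : ¬IsDescent w i ↔ w (lo i) < w (hi i) :=
  not_lt.trans <| le_iff_lt_or_eq.trans <| or_iff_left (w.injective.ne (lo_lt_hi i).ne)

theorem isDescent_iff_not_lt : IsDescent w i ↔ ¬w (lo i) < w (hi i) :=
  not_isDescent_iff.not_right

theorem inversions_mul_simpleT_lt (h : IsDescent w i) :
    inversions (w * simpleT i) < inversions w := by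
  have := inversions_lt_mul_simpleT (w := w * simpleT i) (i := i) (by simpa [IsDescent] using h)
  rwa [mul_simpleT_mul_simpleT] at this

theorem isDescent_mul_simpleT_iff_of_far (h : Far i j) :
    IsDescent (w * simpleT j) i ↔ IsDescent w i := by
  simp [IsDescent, simpleT_lo_of_far h, simpleT_hi_of_far h]

theorem eq_one_of_forall_not_isDescent (h : ∀ i, ¬IsDescent w i) : w = 1 := by
  obtain _ | m := n
  · exact Subsingleton.elim _ _
  have hmono : StrictMono w :=
    Fin.strictMono_iff_lt_succ.2 fun k => not_isDescent_iff.1 (h k)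
  exact Equiv.ext fun x => hmono.apply_eq

end Descents

section DemazureRight

variable {w : Equiv.Perm (Fin n)} {i j : Fin (n - 1)}

/-- The Demazure product `w ⋆ s_i`. -/
def demazureRight (i : Fin (n - 1)) (w : Equiv.Perm (Fin n)) : Equiv.Perm (Fin n) :=
  if w (lo i) < w (hi i) then w * simpleT i else w

theorem demazureRight_of_lt (h : w (lo i) < w (hi i)) : demazureRight i w = w * simpleT i :=
  if_pos h

theorem demazureRight_of_not_lt (h : ¬w (lo i) < w (hi i)) : demazureRight i w = w :=
  if_neg h

theorem demazureRight_idem (i : Fin (n - 1)) (w : Equiv.Perm (Fin n)) :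
    demazureRight i (demazureRight i w) = demazureRight i w := by
  unfold demazureRight
  split_ifs with h₁ h₂ <;> simp_all [lt_asymm]

theorem demazureRight_comm (h : Far i j) (w : Equiv.Perm (Fin n)) :
    demazureRight i (demazureRight j w) = demazureRight j (demazureRight i w) := by
  unfold demazureRight
  split_ifs <;> simp_all [simpleT_lo_of_far, simpleT_hi_of_far, h.symm, mul_assoc, simpleT_comm h]
  order

theorem demazureRight_braid (h : j.1 = i.1 + 1) (w : Equiv.Perm (Fin n)) :
    demazureRight i (demazureRight j (demazureRight i w)) =
      demazureRight j (demazureRight i (demazureRight j w)) := by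
  unfold demazureRight
  split_ifs <;>
    simp_all [lo_eq_hi_of_adj h, simpleT_hi_of_adj h, simpleT_lo_of_adj h,
      simpleT_hi_eq_hi_of_adj h] <;>
    first | order | simpa only [mul_assoc] using congrArg (w * ·) (simpleT_braid h)

theorem demazureRight_mul_simpleT (h : IsDescent w i) : demazureRight i (w * simpleT i) = w := by
  rw [demazureRight_of_lt (by simpa [IsDescent] using h), mul_simpleT_mul_simpleT]

end DemazureRight

section FixesOrRaises

def FixesOrRaises (f : Equiv.Perm (Fin n) → Equiv.Perm (Fin n)) : Prop :=
  ∀ w, f w = w ∨ inversions w < inversions (f w)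

variable {f g : Equiv.Perm (Fin n) → Equiv.Perm (Fin n)}

theorem fixesOrRaises_id : FixesOrRaises (n := n) id := fun _ => Or.inl rfl

theorem FixesOrRaises.comp (hf : FixesOrRaises f) (hg : FixesOrRaises g) :
    FixesOrRaises (f ∘ g) := fun w => by
  rcases hg w with h | h
  · simpa [h] using hf w
  · refine Or.inr (h.trans_le ?_)
    rcases hf (g w) with h' | h'
    · rw [Function.comp_apply, h']
    · exact h'.le

theorem fixesOrRaises_demazureRight (i : Fin (n - 1)) : FixesOrRaises (demazureRight i) :=
  fun w => by
    by_cases h : w (lo i) < w (hi i)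
    · exact Or.inr (by rw [demazureRight_of_lt h]; exact inversions_lt_mul_simpleT h)
    · exact Or.inl (demazureRight_of_not_lt h)

end FixesOrRaises

section DemazureLeft

variable {w : Equiv.Perm (Fin n)} {i j : Fin (n - 1)}

/-- The Demazure product `s_j ⋆ w`. -/
def demazureLeft (j : Fin (n - 1)) (w : Equiv.Perm (Fin n)) : Equiv.Perm (Fin n) :=
  (demazureRight j w⁻¹)⁻¹

theorem demazureLeft_of_lt (h : w⁻¹ (lo j) < w⁻¹ (hi j)) :
    demazureLeft j w = simpleT j * w := by
  simp [demazureLeft, demazureRight_of_lt h]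

theorem demazureLeft_of_not_lt (h : ¬w⁻¹ (lo j) < w⁻¹ (hi j)) : demazureLeft j w = w := by
  simp [demazureLeft, demazureRight_of_not_lt h]

theorem fixesOrRaises_demazureLeft (j : Fin (n - 1)) : FixesOrRaises (demazureLeft j) :=
  fun w => by
    simpa [demazureLeft, inv_eq_iff_eq_inv, inversions_inv] using
      fixesOrRaises_demazureRight j w⁻¹

theorem exists_demazureLeft_eq (h : w ≠ 1) :
    ∃ j w', demazureLeft j w' = w ∧ inversions w' < inversions w := by
  obtain ⟨j, hj⟩ : ∃ j, IsDescent w⁻¹ j := by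
    by_contra! hw
    exact h (inv_eq_one.1 (eq_one_of_forall_not_isDescent hw))
  refine ⟨j, simpleT j * w, ?_, ?_⟩
  · simpa [demazureLeft] using congrArg (·⁻¹) (demazureRight_mul_simpleT hj)
  · rw [← inversions_inv, mul_inv_rev, simpleT_inv, ← inversions_inv w]
    exact inversions_mul_simpleT_lt hj

theorem simpleT_mul_eq_mul_simpleT (h₁ : w (lo i) = lo j) (h₂ : w (hi i) = hi j) :
    simpleT j * w = w * simpleT i := by
  have := Equiv.swap_apply_apply w (lo i) (hi i)
  rw [h₁, h₂, ← simpleT_eq_swap, ← simpleT_eq_swap] at this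
  rw [this, mul_assoc, inv_mul_cancel, mul_one]

/-- Associativity of the Demazure product: `(s_j ⋆ w) ⋆ s_i = s_j ⋆ (w ⋆ s_i)`. -/
theorem demazureRight_demazureLeft (i j : Fin (n - 1)) (w : Equiv.Perm (Fin n)) :
    demazureRight i (demazureLeft j w) = demazureLeft j (demazureRight i w) := by
  by_cases hA : w⁻¹ (lo j) < w⁻¹ (hi j)
  · rw [demazureLeft_of_lt hA]
    by_cases hal : w (lo i) = lo j ∧ w (hi i) = hi j
    · obtain ⟨h₁, h₂⟩ := hal
      have hB : w (lo i) < w (hi i) := by rw [h₁, h₂]; exact lo_lt_hi j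
      rw [demazureRight_of_lt hB, demazureRight_of_not_lt, demazureLeft_of_not_lt,
        simpleT_mul_eq_mul_simpleT h₁ h₂]
      · simp [← h₁, ← h₂, (lo_lt_hi i).not_gt]
      · simp [h₁, h₂, (lo_lt_hi j).not_gt]
    by_cases hB : w (lo i) < w (hi i)
    · have hal' : ¬(w⁻¹ (lo j) = lo i ∧ w⁻¹ (hi j) = hi i) := fun ⟨h₁, h₂⟩ =>
        hal ⟨by simp [← h₁], by simp [← h₂]⟩
      rw [demazureRight_of_lt hB, demazureRight_of_lt, demazureLeft_of_lt, mul_assoc]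
      · simpa using simpleT_lt_simpleT hA hal'
      · simpa using simpleT_lt_simpleT hB hal
    · have hB' : w (hi i) < w (lo i) := isDescent_iff_not_lt.2 hB
      have hal' : ¬(w (hi i) = lo j ∧ w (lo i) = hi j) := fun ⟨h₁, h₂⟩ => by
        simp [← h₁, ← h₂, (lo_lt_hi i).not_gt] at hA
      rw [demazureRight_of_not_lt hB, demazureLeft_of_lt hA, demazureRight_of_not_lt]
      simpa using (simpleT_lt_simpleT hB' hal').not_gt
  · rw [demazureLeft_of_not_lt hA]
    by_cases hB : w (lo i) < w (hi i)
    · have hA' : w⁻¹ (hi j) < w⁻¹ (lo j) := isDescent_iff_not_lt.2 hA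
      have hal' : ¬(w⁻¹ (hi j) = lo i ∧ w⁻¹ (lo j) = hi i) := fun ⟨h₁, h₂⟩ => by
        simp [← h₁, ← h₂, (lo_lt_hi j).not_gt] at hB
      rw [demazureRight_of_lt hB, demazureLeft_of_not_lt]
      simpa using (simpleT_lt_simpleT hA' hal').not_gt
    · rw [demazureRight_of_not_lt hB, demazureLeft_of_not_lt hA]

end DemazureLeft

section HeckeMonoid

theorem heckeGen_mul_self (i : Fin (n - 1)) : heckeGen n i * heckeGen n i = heckeGen n i :=
  (heckeCon n).eq.2 <| ConGen.Rel.of _ _ <| Or.inl ⟨i, rfl⟩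

theorem heckeGen_comm {i j : Fin (n - 1)} (h : i.1 + 2 ≤ j.1) :
    heckeGen n i * heckeGen n j = heckeGen n j * heckeGen n i :=
  (heckeCon n).eq.2 <| ConGen.Rel.of _ _ <| Or.inr <| Or.inl ⟨i, j, h, rfl⟩

theorem heckeGen_braid {i j : Fin (n - 1)} (h : j.1 = i.1 + 1) :
    heckeGen n i * heckeGen n j * heckeGen n i = heckeGen n j * heckeGen n i * heckeGen n j :=
  (heckeCon n).eq.2 <| ConGen.Rel.of _ _ <| Or.inr <| Or.inr ⟨i, j, h, rfl⟩

theorem closure_range_heckeGen : Submonoid.closure (Set.range (heckeGen n)) = ⊤ := by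
  rw [← MonoidHom.mrange_eq_top.2 (heckeCon n).mk'_surjective, MonoidHom.mrange_eq_map,
    ← FreeMonoid.closure_range_of, MonoidHom.map_mclosure, ← Set.range_comp]
  rfl

@[elab_as_elim]
theorem induction_on_right {motive : Hecke n → Prop} (x : Hecke n) (one : motive 1)
    (mul_heckeGen : ∀ x i, motive x → motive (x * heckeGen n i)) : motive x :=
  Submonoid.induction_of_closure_eq_top_right closure_range_heckeGen x one <| by
    rintro x _ ⟨i, rfl⟩; exact mul_heckeGen x i

end HeckeMonoid

section Action

def freeAction : FreeMonoid (Fin (n - 1)) →* (Function.End (Equiv.Perm (Fin n)))ᵐᵒᵖ :=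
  FreeMonoid.lift fun i => .op (demazureRight i)

theorem heckeCon_le_ker : heckeCon n ≤ Con.ker freeAction := by
  refine Con.conGen_le.2 ?_
  rintro x y (⟨i, hp⟩ | ⟨i, j, hij, hp⟩ | ⟨i, j, hij, hp⟩) <;>
    simp only [Prod.mk.injEq] at hp <;> obtain ⟨rfl, rfl⟩ := hp <;>
    refine MulOpposite.unop_injective (funext fun w => ?_) <;>
    simp only [map_mul, freeAction, FreeMonoid.lift_eval_of, MulOpposite.unop_mul]
  · exact demazureRight_idem i w
  · exact (demazureRight_comm (Or.inl hij) w).symm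
  · exact demazureRight_braid hij w

def heckeAction : Hecke n →* (Function.End (Equiv.Perm (Fin n)))ᵐᵒᵖ :=
  (heckeCon n).lift freeAction heckeCon_le_ker

def act (x : Hecke n) (w : Equiv.Perm (Fin n)) : Equiv.Perm (Fin n) := (heckeAction x).unop w

@[simp] theorem act_one (w : Equiv.Perm (Fin n)) : act 1 w = w := by
  simp only [act, map_one, MulOpposite.unop_one]; rfl

theorem act_mul (x y : Hecke n) (w : Equiv.Perm (Fin n)) : act (x * y) w = act y (act x w) := by
  simp only [act, map_mul, MulOpposite.unop_mul]; rfl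

@[simp] theorem act_heckeGen (i : Fin (n - 1)) (w : Equiv.Perm (Fin n)) :
    act (heckeGen n i) w = demazureRight i w := by
  simp [act, heckeAction, heckeGen, freeAction]; rfl

theorem fixesOrRaises_act (x : Hecke n) : FixesOrRaises (act x) := by
  induction x using induction_on_right with
  | one => exact fun w => Or.inl (act_one w)
  | mul_heckeGen x i ih =>
    exact fun w => by simpa [act_mul] using (fixesOrRaises_demazureRight i).comp ih w

theorem act_demazureLeft (x : Hecke n) (j : Fin (n - 1)) (w : Equiv.Perm (Fin n)) :
    act x (demazureLeft j w) = demazureLeft j (act x w) := by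
  induction x using induction_on_right generalizing w with
  | one => simp
  | mul_heckeGen x i ih => simp [act_mul, ih, demazureRight_demazureLeft]

theorem exists_fixesOrRaises_act_comm (w : Equiv.Perm (Fin n)) :
    ∃ F, FixesOrRaises F ∧ (∀ x v, act x (F v) = F (act x v)) ∧ F 1 = w := by
  induction hN : inversions w using Nat.strong_induction_on generalizing w with
  | _ N ih =>
  by_cases hw : w = 1
  · exact ⟨id, fixesOrRaises_id, fun _ _ => rfl, hw.symm⟩
  obtain ⟨j, w', rfl, hlt⟩ := exists_demazureLeft_eq hw
  obtain ⟨F, hF, hcomm, hF1⟩ := ih _ (hN ▸ hlt) w' rfl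
  exact ⟨demazureLeft j ∘ F, (fixesOrRaises_demazureLeft j).comp hF,
    fun x v => by simp [act_demazureLeft, hcomm], by simp [hF1]⟩

theorem act_one_eq_or_inversions_lt {a b u v : Hecke n} (h : a = u * b * v) :
    act a 1 = act b 1 ∨ inversions (act b 1) < inversions (act a 1) := by
  obtain ⟨F, hF, hcomm, hF1⟩ := exists_fixesOrRaises_act_comm (act u 1)
  have : act a 1 = act v (F (act b 1)) := by rw [h, act_mul, act_mul, ← hF1, hcomm]
  simpa [this] using ((fixesOrRaises_act v).comp hF) (act b 1)

end Action

section NormalForm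

variable {w : Equiv.Perm (Fin n)} {m d : Fin (n - 1)}

open Classical in
noncomputable def ofPerm (w : Equiv.Perm (Fin n)) : Hecke n :=
  if h : ∃ i, IsDescent w i then
    have hne : ({i | IsDescent w i} : Finset (Fin (n - 1))).Nonempty :=
      Finset.filter_nonempty_iff.2 (by simpa using h)
    ofPerm (w * simpleT (Finset.min' _ hne)) * heckeGen n (Finset.min' _ hne)
  else 1
termination_by inversions w
decreasing_by exact inversions_mul_simpleT_lt (by simpa using Finset.min'_mem _ hne)

theorem ofPerm_one : ofPerm (1 : Equiv.Perm (Fin n)) = 1 := by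
  rw [ofPerm, dif_neg]
  simp [IsDescent, (lo_lt_hi _).not_gt]

theorem ofPerm_eq_mul (hm : IsDescent w m) (hmin : ∀ k, IsDescent w k → m ≤ k) :
    ofPerm w = ofPerm (w * simpleT m) * heckeGen n m := by
  classical
  rw [ofPerm, dif_pos ⟨m, hm⟩]
  have : ({i | IsDescent w i} : Finset (Fin (n - 1))).min' _ = m :=
    le_antisymm (Finset.min'_le _ _ (by simpa using hm))
      (Finset.le_min' _ _ _ (by simpa using hmin))
  simp only [this]

theorem le_of_isDescent_mul_simpleT (hmin : ∀ k, IsDescent w k → m ≤ k) (hmd : m < d) :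
    ∀ k, IsDescent (w * simpleT d) k → m ≤ k := by
  intro k hk
  by_contra! hkm
  have hfar : Far k d := Or.inl (by have := Fin.lt_def.1 hkm; have := Fin.lt_def.1 hmd; omega)
  exact (hmin k ((isDescent_mul_simpleT_iff_of_far hfar).1 hk)).not_gt hkm

theorem ofPerm_exchange_of_far (hm : IsDescent w m) (hmin : ∀ k, IsDescent w k → m ≤ k)
    (hd : IsDescent w d) (ih : ∀ v k, inversions v < inversions w → IsDescent v k →
      ofPerm (v * simpleT k) * heckeGen n k = ofPerm v)
    (hfar : m.1 + 2 ≤ d.1) :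
    ofPerm (w * simpleT d) * heckeGen n d = ofPerm w := by
  have hmd : m < d := Fin.lt_def.2 (by omega)
  have hdm : IsDescent (w * simpleT m) d :=
    (isDescent_mul_simpleT_iff_of_far (Or.inr hfar)).2 hd
  calc ofPerm (w * simpleT d) * heckeGen n d
      = ofPerm (w * simpleT d * simpleT m) * heckeGen n m * heckeGen n d := by
        rw [← ofPerm_eq_mul ((isDescent_mul_simpleT_iff_of_far (Or.inl hfar)).2 hm)
          (le_of_isDescent_mul_simpleT hmin hmd)]
    _ = ofPerm (w * simpleT m * simpleT d) * heckeGen n d * heckeGen n m := by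
        rw [mul_assoc, heckeGen_comm hfar, ← mul_assoc, mul_assoc w, mul_assoc w,
          simpleT_comm (Or.inl hfar)]
    _ = ofPerm w := by
        rw [ih _ _ (inversions_mul_simpleT_lt hm) hdm, ← ofPerm_eq_mul hm hmin]

theorem ofPerm_exchange_of_adj (hm : IsDescent w m) (hmin : ∀ k, IsDescent w k → m ≤ k)
    (hd : IsDescent w d) (ih : ∀ v k, inversions v < inversions w → IsDescent v k →
      ofPerm (v * simpleT k) * heckeGen n k = ofPerm v)
    (hadj : d.1 = m.1 + 1) :
    ofPerm (w * simpleT d) * heckeGen n d = ofPerm w := by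
  have hmd : m < d := Fin.lt_def.2 (by omega)
  have h₁ := simpleT_hi_of_adj hadj
  have h₂ := simpleT_lo_of_adj hadj
  have h₃ := simpleT_hi_eq_hi_of_adj hadj
  have h₄ := lo_eq_hi_of_adj hadj
  have hm' : w (hi m) < w (lo m) := hm
  have hd' : w (hi d) < w (hi m) := by simpa [IsDescent, h₄] using hd
  have hdm : IsDescent (w * simpleT d) m := by simp [IsDescent, h₂, h₃]; order
  have hdmd : IsDescent (w * simpleT d * simpleT m) d := by
    simp [IsDescent, h₁, h₂, h₄]; order
  have hmdm : IsDescent (w * simpleT m * simpleT d) m := by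
    simp [IsDescent, h₁, h₂, h₃]; order
  have hmd' : IsDescent (w * simpleT m) d := by simp [IsDescent, h₁, h₄]; order
  have hbraid : w * simpleT d * simpleT m * simpleT d = w * simpleT m * simpleT d * simpleT m := by
    simpa only [mul_assoc] using congrArg (w * ·) (simpleT_braid hadj).symm
  calc ofPerm (w * simpleT d) * heckeGen n d
      = ofPerm (w * simpleT d * simpleT m) * heckeGen n m * heckeGen n d := by
        rw [← ofPerm_eq_mul hdm (le_of_isDescent_mul_simpleT hmin hmd)]
    _ = ofPerm (w * simpleT d * simpleT m * simpleT d) * heckeGen n d * heckeGen n m *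
          heckeGen n d := by
        rw [ih _ _ ((inversions_mul_simpleT_lt hdm).trans (inversions_mul_simpleT_lt hd)) hdmd]
    _ = ofPerm (w * simpleT m * simpleT d * simpleT m) * heckeGen n m * heckeGen n d *
          heckeGen n m := by
        rw [hbraid]; simp only [mul_assoc]; congr 1
        simpa only [mul_assoc] using (heckeGen_braid hadj).symm
    _ = ofPerm w := by
        rw [ih _ _ ((inversions_mul_simpleT_lt hmd').trans (inversions_mul_simpleT_lt hm)) hmdm,
          ih _ _ (inversions_mul_simpleT_lt hm) hmd', ← ofPerm_eq_mul hm hmin]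

theorem ofPerm_mul_simpleT_mul_heckeGen (hd : IsDescent w d) :
    ofPerm (w * simpleT d) * heckeGen n d = ofPerm w := by
  induction hN : inversions w using Nat.strong_induction_on generalizing w d with
  | _ N ih =>
  subst hN
  obtain ⟨m, hm, hmin⟩ := wellFounded_lt.has_min {k | IsDescent w k} ⟨d, hd⟩
  replace hmin : ∀ k, IsDescent w k → m ≤ k := fun k hk => not_lt.1 (hmin k hk)
  rcases (hmin d hd).eq_or_lt with rfl | hmd
  · exact (ofPerm_eq_mul hm hmin).symm
  by_cases hfar : m.1 + 2 ≤ d.1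
  · exact ofPerm_exchange_of_far hm hmin hd (fun v k hv hk => ih _ hv hk rfl) hfar
  · exact ofPerm_exchange_of_adj hm hmin hd (fun v k hv hk => ih _ hv hk rfl)
      (by have := Fin.lt_def.1 hmd; omega)

theorem ofPerm_mul_heckeGen (w : Equiv.Perm (Fin n)) (i : Fin (n - 1)) :
    ofPerm w * heckeGen n i = ofPerm (demazureRight i w) := by
  by_cases h : w (lo i) < w (hi i)
  · rw [demazureRight_of_lt h, ← ofPerm_mul_simpleT_mul_heckeGen (w := w * simpleT i),
      mul_simpleT_mul_simpleT]
    simpa [IsDescent] using h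
  · rw [demazureRight_of_not_lt h, ← ofPerm_mul_simpleT_mul_heckeGen (isDescent_iff_not_lt.2 h),
      mul_assoc, heckeGen_mul_self]

theorem ofPerm_act_one (x : Hecke n) : ofPerm (act x 1) = x := by
  induction x using induction_on_right with
  | one => simp [ofPerm_one]
  | mul_heckeGen x i ih => rw [act_mul, act_heckeGen, ← ofPerm_mul_heckeGen, ih]

theorem act_one_injective : Function.Injective fun x : Hecke n => act x 1 :=
  Function.LeftInverse.injective ofPerm_act_one

end NormalForm

end ZeroHecke

/-- The 0-Hecke monoid is J-trivial. -/
theorem stmt_2 (n : ℕ) (a b : Hecke n)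
    (h : {x : Hecke n | ∃ u v, x = u * a * v} = {x : Hecke n | ∃ u v, x = u * b * v}) :
    a = b := by
  obtain ⟨u, v, hab⟩ : a ∈ {x : Hecke n | ∃ u v, x = u * b * v} := h ▸ ⟨1, 1, by simp⟩
  obtain ⟨u', v', hba⟩ : b ∈ {x : Hecke n | ∃ u v, x = u * a * v} :=
    h.symm ▸ ⟨1, 1, by simp⟩
  apply ZeroHecke.act_one_injective
  rcases ZeroHecke.act_one_eq_or_inversions_lt hab with hab' | hab'
  · exact hab'
  rcases ZeroHecke.act_one_eq_or_inversions_lt hba with hba' | hba'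
  · exact hba'.symm
  exact absurd hab' hba'.not_gt
end

section
/- For every order-preserving non-decreasing transformation α of {1,...,n} there is exactly one 321-avoiding permutation w ∈ S_n whose left-to-right maximum function α_w equals α. -/
open Pointwise

/-!
In a 321-avoiding permutation `w`, a value `w j` below the running maximum `lrMax w j` is smaller
than every later value (an earlier larger value and a later smaller one would form a 321 pattern),
so it is the least value not used before `j`. Hence `w` is determined, position by position, by
`lrMax w`.

For existence, call `j` a record of `α` if `α k < α j` for all `k < j`. Send each record `j` to
`α j` and the other positions increasingly onto the other values. A non-record `j` then gets a
value below `α j`, by a pigeonhole count that uses `j ≤ α j`; and the two smaller entries of a 321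
pattern would have to sit at non-records, which carry increasing values.
-/

open Equiv Finset

section LrMax

variable {n : ℕ} (w : Perm (Fin n))

lemma le_lrMax {k j : Fin n} (hkj : k ≤ j) : w k ≤ lrMax w j :=
  le_sup' (fun k => w k) (mem_Iic.2 hkj)

lemma exists_le_apply_eq_lrMax (j : Fin n) : ∃ k ≤ j, w k = lrMax w j := by
  obtain ⟨k, hk, hkj⟩ := exists_mem_eq_sup' ⟨j, mem_Iic.2 le_rfl⟩ fun k => w k
  exact ⟨k, mem_Iic.1 hk, hkj.symm⟩

variable {w}

lemma lrMax_eq_of_le_of_exists {α : Fin n → Fin n} (hmono : Monotone α)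
    (hle : ∀ k, w k ≤ α k) (hex : ∀ j, ∃ k ≤ j, w k = α j) : lrMax w = α := by
  funext j
  obtain ⟨k, hkj, hk⟩ := hex j
  exact le_antisymm (sup'_le _ _ fun i hi => (hle i).trans (hmono (mem_Iic.1 hi)))
    (hk ▸ le_lrMax w hkj)

lemma Avoids321.apply_lt_of_lt_lrMax (hw : Avoids321 w) {j k : Fin n} (hj : w j < lrMax w j)
    (hjk : j < k) : w j < w k := by
  obtain ⟨p, hpj, hp⟩ := exists_le_apply_eq_lrMax w j
  have hpj : p < j := hpj.lt_of_ne fun h => hj.ne (h ▸ hp)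
  refine lt_of_not_ge fun hkj => hw ⟨p, j, k, hpj, hjk, ?_, hp ▸ hj⟩
  exact hkj.lt_of_ne (w.injective.ne hjk.ne')

variable {w' : Perm (Fin n)} {j : Fin n}

lemma apply_eq_of_apply_eq_lrMax (h : lrMax w = lrMax w') (hlt : ∀ k < j, w k = w' k)
    (hj : w j = lrMax w j) : w' j = w j := by
  obtain ⟨k, hkj, hk⟩ := exists_le_apply_eq_lrMax w' j
  rw [← h, ← hj] at hk
  obtain rfl | hkj := hkj.eq_or_lt
  · exact hk
  · exact absurd (w.injective ((hlt k hkj).trans hk)) hkj.ne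

lemma Avoids321.apply_le_of_lt_lrMax (hw' : Avoids321 w') (hlt : ∀ k < j, w k = w' k)
    (hj : w' j < lrMax w' j) : w' j ≤ w j := by
  obtain ⟨k, hwk⟩ := w'.surjective (w j)
  rcases lt_trichotomy k j with hkj | rfl | hjk
  · exact absurd (w.injective ((hlt k hkj).trans hwk)) hkj.ne
  · exact hwk.le
  · exact hwk ▸ (hw'.apply_lt_of_lt_lrMax hj hjk).le

theorem Avoids321.eq_of_lrMax_eq (hw : Avoids321 w) (hw' : Avoids321 w')
    (h : lrMax w = lrMax w') : w = w' := by
  ext1 j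
  induction j using WellFoundedLT.induction with
  | _ j ih =>
  by_cases hj : w j = lrMax w j
  · exact (apply_eq_of_apply_eq_lrMax h ih hj).symm
  by_cases hj' : w' j = lrMax w' j
  · exact apply_eq_of_apply_eq_lrMax h.symm (fun k hk => (ih k hk).symm) hj'
  exact le_antisymm
    (hw.apply_le_of_lt_lrMax (fun k hk => (ih k hk).symm) ((le_lrMax w le_rfl).lt_of_ne hj))
    (hw'.apply_le_of_lt_lrMax ih ((le_lrMax w' le_rfl).lt_of_ne hj'))

end LrMax

section Construction

variable {n : ℕ} (α : Fin n → Fin n)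

def records : Finset (Fin n) := univ.filter fun j => ∀ k < j, α k < α j

def recordValues : Finset (Fin n) := (records α).image α

variable {α}

lemma lt_of_mem_records {p j : Fin n} (hp : p ∈ records α) (hjp : j < p) : α j < α p :=
  (mem_filter.1 hp).2 j hjp

lemma strictMonoOn_records : StrictMonoOn α (records α) :=
  fun _ _ _ hq hpq => lt_of_mem_records hq hpq

lemma exists_mem_records_le_eq (hmono : Monotone α) (j : Fin n) :
    ∃ p ∈ records α, p ≤ j ∧ α p = α j := by
  induction j using WellFoundedLT.induction with
  | _ j ih =>
  by_cases hj : j ∈ records α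
  · exact ⟨j, hj, le_rfl, rfl⟩
  obtain ⟨k, hkj, hjk⟩ : ∃ k < j, α j ≤ α k := by simpa [records] using hj
  obtain ⟨p, hp, hpk, hpα⟩ := ih k hkj
  exact ⟨p, hp, hpk.trans hkj.le, hpα.trans (le_antisymm (hmono hkj.le) hjk)⟩

variable (α)

noncomputable def recordEquiv : {x // x ∈ records α} ≃ {x // x ∈ recordValues α} :=
  Equiv.ofBijective (fun p => ⟨α p, mem_image_of_mem α p.2⟩)
    ⟨fun p q h => Subtype.ext <| strictMonoOn_records.injOn p.2 q.2 (congrArg Subtype.val h),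
     fun ⟨v, hv⟩ => by
       obtain ⟨p, hp, rfl⟩ := mem_image.1 hv
       exact ⟨⟨p, hp⟩, rfl⟩⟩

lemma card_notMem_records_eq :
    Fintype.card {x // x ∉ records α} = Fintype.card {x // x ∉ recordValues α} := by
  rw [Fintype.card_subtype_compl, Fintype.card_subtype_compl, Fintype.card_coe,
    Fintype.card_coe, recordValues, card_image_of_injOn strictMonoOn_records.injOn]

noncomputable def nonRecordIso : {x // x ∉ records α} ≃o {x // x ∉ recordValues α} :=
  (Fintype.orderIsoFinOfCardEq _ rfl).symm.trans
    (Fintype.orderIsoFinOfCardEq _ (card_notMem_records_eq α).symm)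

noncomputable def permOfLrMax : Perm (Fin n) :=
  (recordEquiv α).subtypeCongr (nonRecordIso α).toEquiv

variable {α}

lemma permOfLrMax_apply_of_mem {j : Fin n} (hj : j ∈ records α) : permOfLrMax α j = α j := by
  simp only [permOfLrMax, subtypeCongr, trans_apply, hj, sumCompl_symm_apply_of_pos,
    sumCongr_apply, Sum.map_inl, sumCompl_apply_inl]
  rfl

lemma permOfLrMax_apply_of_notMem {j : Fin n} (hj : j ∉ records α) :
    permOfLrMax α j = nonRecordIso α ⟨j, hj⟩ := by
  simp [permOfLrMax, Equiv.subtypeCongr, hj]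

lemma Iic_subset_image_Iio_permOfLrMax {j : Fin n} (hj : j ∉ records α)
    (hlt : α j < nonRecordIso α ⟨j, hj⟩) : Iic (α j) ⊆ (Iio j).image (permOfLrMax α) := by
  intro v hv
  replace hv : v ≤ α j := mem_Iic.1 hv
  by_cases hvα : v ∈ recordValues α
  · obtain ⟨p, hp, rfl⟩ := mem_image.1 hvα
    have hpj : p < j := lt_of_not_ge fun hjp =>
      (lt_of_mem_records hp (hjp.lt_of_ne fun h => hj (h ▸ hp))).not_ge hv
    exact mem_image.2 ⟨p, mem_Iio.2 hpj, permOfLrMax_apply_of_mem hp⟩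
  · set i := (nonRecordIso α).symm ⟨v, hvα⟩
    have hij : i < ⟨j, hj⟩ := by
      rw [← (nonRecordIso α).lt_iff_lt, OrderIso.apply_symm_apply]
      exact hv.trans_lt hlt
    refine mem_image.2 ⟨i, mem_Iio.2 hij, ?_⟩
    rw [permOfLrMax_apply_of_notMem i.2]
    simp [i]

/-- Otherwise the `α j + 1` values up to `α j` would all be taken by the `j` earlier positions. -/
lemma permOfLrMax_le (hge : ∀ i, i ≤ α i) (j : Fin n) : permOfLrMax α j ≤ α j := by
  by_cases hj : j ∈ records α
  · exact (permOfLrMax_apply_of_mem hj).le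
  rw [permOfLrMax_apply_of_notMem hj]
  by_contra! hlt
  have hcard := (card_le_card (Iic_subset_image_Iio_permOfLrMax hj hlt)).trans card_image_le
  rw [Fin.card_Iic, Fin.card_Iio] at hcard
  have := hge j
  omega

lemma lrMax_permOfLrMax (hmono : Monotone α) (hge : ∀ i, i ≤ α i) :
    lrMax (permOfLrMax α) = α := by
  refine lrMax_eq_of_le_of_exists hmono (permOfLrMax_le hge) fun j => ?_
  obtain ⟨p, hp, hpj, hpα⟩ := exists_mem_records_le_eq hmono j
  exact ⟨p, hpj, (permOfLrMax_apply_of_mem hp).trans hpα⟩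

lemma avoids321_permOfLrMax (hmono : Monotone α) (hge : ∀ i, i ≤ α i) :
    Avoids321 (permOfLrMax α) := by
  rintro ⟨i, j, k, hij, hjk, hkj, hji⟩
  have hle {a b : Fin n} (hab : a ≤ b) (hb : b ∈ records α) : permOfLrMax α a ≤ permOfLrMax α b :=
    ((permOfLrMax_le hge a).trans (hmono hab)).trans_eq (permOfLrMax_apply_of_mem hb).symm
  have hj : j ∉ records α := fun hj => hji.not_ge (hle hij.le hj)
  have hk : k ∉ records α := fun hk => hkj.not_ge (hle hjk.le hk)
  rw [permOfLrMax_apply_of_notMem hj, permOfLrMax_apply_of_notMem hk] at hkj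
  exact hkj.not_gt ((nonRecordIso α).strictMono hjk)

end Construction

/-- Every order-preserving non-decreasing transformation of `{1,…,n}`
is the left-to-right maximum function of exactly one 321-avoiding permutation. -/
theorem stmt_7 (n : ℕ) (α : Fin n → Fin n) (hmono : Monotone α) (hge : ∀ i, i ≤ α i) :
    ∃! w : Equiv.Perm (Fin n), Avoids321 w ∧ lrMax w = α := by
  have hα := lrMax_permOfLrMax hmono hge
  refine ⟨permOfLrMax α, ⟨avoids321_permOfLrMax hmono hge, hα⟩, ?_⟩
  rintro w ⟨hw, hwα⟩
  exact hw.eq_of_lrMax_eq (avoids321_permOfLrMax hmono hge) (hwα.trans hα.symm)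
end

section
/- For every order-preserving non-decreasing transformation α of {1,...,n}, among all permutations w with left-to-right maximum function α_w = α, the unique 321-avoiding one is the unique minimal element with respect to the Bruhat order; moreover the set {w : α_w = α} contains a unique 312-avoiding permutation, and that permutation is the unique Bruhat-maximal element of the set. -/
open Pointwise

/-! The fiber `{w | α_w = α}` is traversed by steps `w ↦ w * swap a b` exchanging two values that
both lie below the running maximum `α a`; such a step keeps `α_w`. Taking `b` as close to `a` as
possible makes the step a Bruhat cover, so by the strong exchange property it deletes one letter
from every reduced word. A 321-pattern yields a downward step and a 312-pattern an upward one,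
while in a fiber a 321-avoiding (resp. 312-avoiding) permutation is determined position by
position. Descending (resp. ascending) from any element of the fiber therefore ends at the unique
321-avoiding (resp. 312-avoiding) element, which lies below (resp. above) it in Bruhat order.
The fiber is nonempty by Hall's marriage theorem. -/

open Equiv Finset

lemma crossing_of_swap_apply_le {α : Type*} [LinearOrder α] {a b x y : α} (hab : a < b)
    (hxy : x < y) (h : swap a b y ≤ swap a b x) :
    (x = a ∧ y ≤ b) ∨ (a ≤ x ∧ y = b) := by
  simp only [swap_apply_def] at h
  split_ifs at h <;> first
    | (exfalso; order) | (left; constructor <;> order) | (right; constructor <;> order)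

section Inversions
variable {n : ℕ}

def invSet (v : Perm (Fin n)) : Finset (Fin n × Fin n) :=
  univ.filter fun p => p.1 < p.2 ∧ v p.2 < v p.1

def invCount (v : Perm (Fin n)) : ℕ := #(invSet v)

lemma mem_invSet {v : Perm (Fin n)} {p : Fin n × Fin n} :
    p ∈ invSet v ↔ p.1 < p.2 ∧ v p.2 < v p.1 := by
  simp [invSet]

lemma invCount_le (v : Perm (Fin n)) : invCount v ≤ n * n := by
  simpa [invCount, invSet] using card_filter_le (univ : Finset (Fin n × Fin n)) _

def swapPair (a b : Fin n) (p : Fin n × Fin n) : Fin n × Fin n :=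
  if swap a b p.1 < swap a b p.2 then (swap a b p.1, swap a b p.2) else p

lemma swapPair_swapPair (a b : Fin n) {p : Fin n × Fin n} (hp : p.1 < p.2) :
    swapPair a b (swapPair a b p) = p := by
  by_cases h : swap a b p.1 < swap a b p.2 <;> simp [swapPair, h, hp]

lemma swapPair_eq_self {a b : Fin n} (hab : a < b) : swapPair a b (a, b) = (a, b) := by
  simp [swapPair, hab.le]

lemma swapPair_mem_invSet {v : Perm (Fin n)} {a b : Fin n} (hab : a < b)
    (hbet : ∀ m, a < m → m < b → v m < v b ∨ v a < v m) {p : Fin n × Fin n}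
    (hp : p ∈ (invSet v).erase (a, b)) :
    swapPair a b p ∈ (invSet (v * swap a b)).erase (a, b) := by
  obtain ⟨hne, hp⟩ := mem_erase.1 hp
  obtain ⟨x, y⟩ := p
  obtain ⟨hxy, hv⟩ := mem_invSet.1 hp
  dsimp only at hxy hv
  refine mem_erase.2 ⟨fun h => hne ?_, ?_⟩
  · rw [← swapPair_swapPair a b (p := (x, y)) hxy, h, swapPair_eq_self hab]
  by_cases hσ : swap a b x < swap a b y
  · simpa [swapPair, hσ, mem_invSet] using hv
  -- a pair reversed by `swap a b` is `(a, m)` or `(m, b)` with `a < m < b`, where `hbet` applies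
  simp only [swapPair, hσ, if_false, mem_invSet, Perm.mul_apply]
  refine ⟨hxy, ?_⟩
  rcases crossing_of_swap_apply_le hab hxy (not_lt.1 hσ) with ⟨rfl, hyb⟩ | ⟨hax, rfl⟩
  · obtain rfl | hyb := hyb.eq_or_lt
    · exact absurd rfl hne
    rw [swap_apply_left, swap_apply_of_ne_of_ne hxy.ne' hyb.ne]
    exact (hbet y hxy hyb).resolve_right (not_lt.2 hv.le)
  · obtain rfl | hax := hax.eq_or_lt
    · exact absurd rfl hne
    rw [swap_apply_right, swap_apply_of_ne_of_ne hax.ne' hxy.ne]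
    exact (hbet x hax hxy).resolve_left (not_lt.2 hv.le)

lemma card_erase_invSet_le {v : Perm (Fin n)} {a b : Fin n} (hab : a < b)
    (hbet : ∀ m, a < m → m < b → v m < v b ∨ v a < v m) :
    #((invSet v).erase (a, b)) ≤ #((invSet (v * swap a b)).erase (a, b)) :=
  card_le_card_of_injOn (swapPair a b) (fun _ hp => swapPair_mem_invSet hab hbet hp)
    fun p hp q hq h => by
      rw [← swapPair_swapPair a b (mem_invSet.1 (mem_of_mem_erase hp)).1,
        ← swapPair_swapPair a b (mem_invSet.1 (mem_of_mem_erase hq)).1, h]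

lemma invCount_mul_swap_add_one {v : Perm (Fin n)} {a b : Fin n} (hab : a < b) (hv : v b < v a)
    (hbet : ∀ m, a < m → m < b → v m < v b ∨ v a < v m) :
    invCount (v * swap a b) + 1 = invCount v := by
  have hbet' : ∀ m, a < m → m < b →
      (v * swap a b) m < (v * swap a b) b ∨ (v * swap a b) a < (v * swap a b) m := by
    intro m ham hmb
    simp only [Perm.mul_apply, swap_apply_left, swap_apply_right,
      swap_apply_of_ne_of_ne ham.ne' hmb.ne]
    rcases hbet m ham hmb with h | h
    · exact Or.inl (h.trans hv)
    · exact Or.inr (hv.trans h)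
  have hle := card_erase_invSet_le hab hbet'
  rw [mul_assoc, swap_mul_self, mul_one] at hle
  have hnot : (a, b) ∉ invSet (v * swap a b) := by
    simp [mem_invSet, hv.le]
  have hmem : (a, b) ∈ invSet v := mem_invSet.2 ⟨hab, hv⟩
  rw [invCount, invCount, ← card_erase_add_one hmem, ← erase_eq_of_notMem hnot]
  have := card_erase_invSet_le hab hbet
  omega

end Inversions

section ReducedWords
variable {n : ℕ}

lemma invCount_one : invCount (1 : Perm (Fin n)) = 0 := by
  rw [invCount, card_eq_zero, invSet, filter_eq_empty_iff]
  exact fun p _ h => lt_asymm h.1 h.2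

lemma exists_simpleT_eq_swap {a b : Fin n} (hab : b.1 = a.1 + 1) :
    ∃ i : Fin (n - 1), simpleT i = swap a b :=
  ⟨⟨a.1, by omega⟩, by simp only [simpleT]; congr; exact hab.symm⟩

lemma exists_swap_eq_simpleT (i : Fin (n - 1)) :
    ∃ a b : Fin n, b.1 = a.1 + 1 ∧ simpleT i = swap a b :=
  ⟨_, _, rfl, rfl⟩

lemma invCount_mul_swap_adjacent_add_one {v : Perm (Fin n)} {a b : Fin n} (hab : b.1 = a.1 + 1)
    (hv : v b < v a) : invCount (v * swap a b) + 1 = invCount v :=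
  invCount_mul_swap_add_one (Fin.lt_def.2 (by omega)) hv fun m ham hmb => by
    rw [Fin.lt_def] at ham hmb; omega

lemma invCount_mul_simpleT_le (v : Perm (Fin n)) (i : Fin (n - 1)) :
    invCount (v * simpleT i) ≤ invCount v + 1 := by
  obtain ⟨a, b, hab, hi⟩ := exists_swap_eq_simpleT i
  rw [hi]
  rcases lt_or_gt_of_ne (v.injective.ne (Fin.ne_of_val_ne (by omega) : b ≠ a)) with hv | hv
  · have := invCount_mul_swap_adjacent_add_one hab hv
    omega
  · have := invCount_mul_swap_adjacent_add_one (v := v * swap a b) hab (by simpa using hv)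
    rw [mul_assoc, swap_mul_self, mul_one] at this
    omega

lemma invCount_prod_le_length (l : List (Fin (n - 1))) :
    invCount (l.map simpleT).prod ≤ l.length := by
  induction l using List.reverseRecOn with
  | nil => simp [invCount_one]
  | append_singleton l i ih =>
    simp only [List.map_append, List.map_singleton, List.prod_append, List.prod_singleton,
      List.length_append, List.length_singleton]
    exact (invCount_mul_simpleT_le _ i).trans (by omega)

lemma exists_adjacent_descent {v : Perm (Fin n)} (hv : v ≠ 1) :
    ∃ a b : Fin n, b.1 = a.1 + 1 ∧ v b < v a := by
  obtain _ | m := n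
  · exact absurd (Subsingleton.elim v 1) hv
  have hmono : ¬ StrictMono v := fun h => hv <| Equiv.ext <| congrFun <|
    (h.range_inj strictMono_id).1 (by simp)
  rw [Fin.strictMono_iff_lt_succ] at hmono
  push Not at hmono
  obtain ⟨i, hi⟩ := hmono
  exact ⟨i.castSucc, i.succ, rfl,
    hi.lt_of_ne (v.injective.ne i.castSucc_lt_succ.ne')⟩

lemma exists_word_length_eq_invCount (v : Perm (Fin n)) :
    ∃ l : List (Fin (n - 1)), (l.map simpleT).prod = v ∧ l.length = invCount v := by
  by_cases hv : v = 1
  · exact ⟨[], by simp [hv], by simp [hv, invCount_one]⟩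
  obtain ⟨a, b, hab, hvab⟩ := exists_adjacent_descent hv
  obtain ⟨i, hi⟩ := exists_simpleT_eq_swap hab
  have hcount := invCount_mul_swap_adjacent_add_one hab hvab
  obtain ⟨l, hl, hlen⟩ := exists_word_length_eq_invCount (v * swap a b)
  refine ⟨l ++ [i], ?_, ?_⟩
  · simp [hl, hi, mul_assoc]
  · simp [hlen, hcount]
termination_by invCount v
decreasing_by omega

lemma isRedWord_iff {v : Perm (Fin n)} {l : List (Fin (n - 1))} :
    IsRedWord v l ↔ (l.map simpleT).prod = v ∧ l.length = invCount v := by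
  constructor
  · rintro ⟨hl, hmin⟩
    obtain ⟨l₀, hl₀, hlen₀⟩ := exists_word_length_eq_invCount v
    exact ⟨hl, le_antisymm (hlen₀ ▸ hmin l₀ hl₀) (hl ▸ invCount_prod_le_length l)⟩
  · rintro ⟨hl, hlen⟩
    exact ⟨hl, fun l' hl' => hlen ▸ hl' ▸ invCount_prod_le_length l'⟩

lemma exists_isRedWord (v : Perm (Fin n)) : ∃ l, IsRedWord v l := by
  obtain ⟨l, hl, hlen⟩ := exists_word_length_eq_invCount v
  exact ⟨l, isRedWord_iff.2 ⟨hl, hlen⟩⟩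

/-- The strong exchange property. -/
lemma exists_eraseIdx_prod_eq_mul_swap (l : List (Fin (n - 1))) {a b : Fin n} (hab : a < b)
    (hv : (l.map simpleT).prod b < (l.map simpleT).prod a) :
    ∃ j < l.length, ((l.eraseIdx j).map simpleT).prod = (l.map simpleT).prod * swap a b := by
  induction l with
  | nil =>
    simp only [List.map_nil, List.prod_nil, Perm.one_apply] at hv
    exact absurd hv hab.not_gt
  | cons i l ih =>
    obtain ⟨u, hlu⟩ : ∃ u, (l.map simpleT).prod = u := ⟨_, rfl⟩
    simp only [List.map_cons, List.prod_cons, Perm.mul_apply, hlu] at ih hv ⊢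
    rcases lt_or_gt_of_ne (u.injective.ne hab.ne') with hu | hu
    · obtain ⟨j, hj, he⟩ := ih hu
      exact ⟨j + 1, by simpa using hj, by simp [he, mul_assoc]⟩
    -- otherwise the first letter is the one exchanging the values `u a` and `u b`
    obtain ⟨P, Q, hPQ, hi⟩ := exists_swap_eq_simpleT i
    rw [hi] at hv ⊢
    have hPQ' : P < Q := Fin.lt_def.2 (by omega)
    obtain ⟨rfl, rfl⟩ : u a = P ∧ u b = Q := by
      rcases crossing_of_swap_apply_le hPQ' hu hv.le with ⟨h, h'⟩ | ⟨h, h'⟩ <;>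
        simp only [Fin.ext_iff, Fin.le_def, Fin.lt_def] at * <;> omega
    refine ⟨0, by simp, ?_⟩
    rw [List.eraseIdx_cons_zero, hlu, swap_apply_apply, inv_mul_cancel_right, mul_assoc,
      swap_mul_self, mul_one]

end ReducedWords

section Bruhat
variable {n : ℕ}

/-- Unlike `bruhatLE`, this form of the subword property is transitive by construction. -/
def EveryRedWordContains (u w : Perm (Fin n)) : Prop :=
  ∀ l, IsRedWord w l → ∃ l', l'.Sublist l ∧ IsRedWord u l'

lemma EveryRedWordContains.refl (u : Perm (Fin n)) : EveryRedWordContains u u :=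
  fun l hl => ⟨l, List.Sublist.refl l, hl⟩

lemma EveryRedWordContains.trans {u v w : Perm (Fin n)} (huv : EveryRedWordContains u v)
    (hvw : EveryRedWordContains v w) : EveryRedWordContains u w := by
  intro l hl
  obtain ⟨l₁, hl₁, hr₁⟩ := hvw l hl
  obtain ⟨l₂, hl₂, hr₂⟩ := huv l₁ hr₁
  exact ⟨l₂, hl₂.trans hl₁, hr₂⟩

lemma EveryRedWordContains.bruhatLE {u w : Perm (Fin n)} (h : EveryRedWordContains u w) :
    bruhatLE u w := by
  obtain ⟨l, hl⟩ := exists_isRedWord w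
  exact ⟨l, hl, h l hl⟩

lemma everyRedWordContains_mul_swap {v : Perm (Fin n)} {a b : Fin n} (hab : a < b)
    (hv : v b < v a) (hbet : ∀ m, a < m → m < b → v m < v b ∨ v a < v m) :
    EveryRedWordContains (v * swap a b) v := by
  intro l hl
  obtain ⟨hprod, hlen⟩ := isRedWord_iff.1 hl
  obtain ⟨j, hj, he⟩ := exists_eraseIdx_prod_eq_mul_swap l hab (hprod ▸ hv)
  refine ⟨l.eraseIdx j, List.eraseIdx_sublist l j,
    isRedWord_iff.2 ⟨he.trans (by rw [hprod]), ?_⟩⟩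
  have := invCount_mul_swap_add_one hab hv hbet
  rw [List.length_eraseIdx_of_lt hj]
  omega

end Bruhat

section LRMax
variable {n : ℕ}

lemma apply_le_lrMax (w : Perm (Fin n)) {p j : Fin n} (h : p ≤ j) : w p ≤ lrMax w j :=
  le_sup' (fun k => w k) (mem_Iic.2 h)

lemma exists_apply_eq_lrMax (w : Perm (Fin n)) (j : Fin n) : ∃ p ≤ j, w p = lrMax w j := by
  obtain ⟨p, hp, he⟩ := exists_mem_eq_sup' ⟨j, mem_Iic.2 le_rfl⟩ fun k => w k
  exact ⟨p, mem_Iic.1 hp, he.symm⟩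

lemma lrMax_mono (w : Perm (Fin n)) : Monotone (lrMax w) :=
  fun _ _ h => sup'_mono _ (Iic_subset_Iic.2 h) _

lemma lrMax_mul_swap {v : Perm (Fin n)} {a b : Fin n} (hab : a < b) (ha : v a < lrMax v a)
    (hb : v b < lrMax v a) : lrMax (v * swap a b) = lrMax v := by
  funext m
  apply le_antisymm
  · refine sup'_le _ _ fun x hx => ?_
    have hxm := mem_Iic.1 hx
    simp only [Perm.mul_apply, swap_apply_def]
    split_ifs with hxa hxb
    · exact hb.le.trans (lrMax_mono v (hxa ▸ hxm))
    · exact ha.le.trans (lrMax_mono v (hab.le.trans (hxb ▸ hxm)))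
    · exact apply_le_lrMax v hxm
  · obtain ⟨p, hpm, hp⟩ := exists_apply_eq_lrMax v m
    have hpa : p ≠ a := by
      rintro rfl
      exact (hp ▸ ha).not_ge (lrMax_mono v hpm)
    have hpb : p ≠ b := by
      rintro rfl
      exact (hp ▸ hb).not_ge (lrMax_mono v (hab.le.trans hpm))
    rw [← hp, ← swap_apply_of_ne_of_ne hpa hpb]
    exact apply_le_lrMax (v * swap a b) hpm

lemma lt_of_apply_eq_of_agree {v v' : Perm (Fin n)} {j k : Fin n}
    (hagree : ∀ m < j, v m = v' m) (hk : v k = v' j) (hkj : k ≠ j) : j < k := by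
  refine lt_of_le_of_ne (not_lt.1 fun hlt => hkj ?_) hkj.symm
  exact v'.injective ((hagree k hlt).symm.trans hk)

lemma exists_first_ne {v v' : Perm (Fin n)} (hne : v ≠ v') :
    ∃ j, v j ≠ v' j ∧ ∀ m < j, v m = v' m := by
  obtain ⟨j, hj, hmin⟩ := wellFounded_lt.has_min {j | v j ≠ v' j}
    (not_forall.1 fun h => hne (Equiv.ext h))
  exact ⟨j, hj, fun m hm => not_not.1 fun h => hmin m h hm⟩

lemma not_lt_of_avoids321 {v v' : Perm (Fin n)} (hfib : lrMax v = lrMax v') (hv : Avoids321 v)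
    {j : Fin n} (hagree : ∀ m < j, v m = v' m) : ¬ v' j < v j := by
  intro hlt
  set k := v.symm (v' j)
  have hk : v k = v' j := v.apply_symm_apply _
  have hjk := lt_of_apply_eq_of_agree hagree hk fun h => (h ▸ hk ▸ hlt).false
  have hvj : v j = lrMax v j := by
    refine le_antisymm (apply_le_lrMax v le_rfl) (not_lt.1 fun hjmax => hv ?_)
    obtain ⟨p, hpj, hp⟩ := exists_apply_eq_lrMax v j
    exact ⟨p, j, k, lt_of_le_of_ne hpj (by rintro rfl; exact hjmax.ne hp), hjk, hk ▸ hlt,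
      hp ▸ hjmax⟩
  obtain ⟨p, hpj, hp⟩ := exists_apply_eq_lrMax v' j
  have hp' : v' p = v j := hp.trans (hfib ▸ hvj.symm)
  have hpj' : p ≠ j := by
    rintro rfl
    exact hlt.ne hp'
  exact hpj' (v.injective ((hagree p (lt_of_le_of_ne hpj hpj')).trans hp'))

lemma not_lt_of_avoids312 {v v' : Perm (Fin n)} (hfib : lrMax v = lrMax v') (hv : Avoids312 v)
    {j : Fin n} (hagree : ∀ m < j, v m = v' m) : ¬ v j < v' j := by
  intro hlt
  set k := v.symm (v' j)
  have hk : v k = v' j := v.apply_symm_apply _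
  have hjk := lt_of_apply_eq_of_agree hagree hk fun h => (h ▸ hk ▸ hlt).false
  obtain ⟨p, hpj, hp⟩ := exists_apply_eq_lrMax v j
  have hkp : v k ≤ v p := hp ▸ hk ▸ hfib ▸ apply_le_lrMax v' le_rfl
  have hpj' : p ≠ j := by
    rintro rfl
    exact (hk ▸ hlt).not_ge hkp
  exact hv ⟨p, j, k, lt_of_le_of_ne hpj hpj', hjk, hk ▸ hlt,
    lt_of_le_of_ne hkp (v.injective.ne (hjk.trans_le' hpj).ne')⟩

lemma eq_of_avoids321 {v v' : Perm (Fin n)} (hfib : lrMax v = lrMax v') (hv : Avoids321 v)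
    (hv' : Avoids321 v') : v = v' := by
  by_contra hne
  obtain ⟨j, hj, hagree⟩ := exists_first_ne hne
  rcases lt_or_gt_of_ne hj with h | h
  · exact not_lt_of_avoids321 hfib.symm hv' (fun m hm => (hagree m hm).symm) h
  · exact not_lt_of_avoids321 hfib hv hagree h

lemma eq_of_avoids312 {v v' : Perm (Fin n)} (hfib : lrMax v = lrMax v') (hv : Avoids312 v)
    (hv' : Avoids312 v') : v = v' := by
  by_contra hne
  obtain ⟨j, hj, hagree⟩ := exists_first_ne hne
  rcases lt_or_gt_of_ne hj with h | h
  · exact not_lt_of_avoids312 hfib hv hagree h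
  · exact not_lt_of_avoids312 hfib.symm hv' (fun m hm => (hagree m hm).symm) h

end LRMax

section Extremal
variable {n : ℕ}

/-- A 321-pattern `i < a < b₀` gives a downward step `v * swap a b`, with `b` the first position
after `a` carrying a value below `v a`. -/
lemma exists_avoids321_everyRedWordContains (v : Perm (Fin n)) :
    ∃ w, lrMax w = lrMax v ∧ Avoids321 w ∧ EveryRedWordContains w v := by
  by_cases hv : Avoids321 v
  · exact ⟨v, rfl, hv, .refl v⟩
  obtain ⟨i, a, b₀, hia, hab₀, hb₀, hai⟩ := not_not.1 hv
  obtain ⟨b, ⟨hab, hb⟩, hmin⟩ :=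
    wellFounded_lt.has_min {b | a < b ∧ v b < v a} ⟨b₀, hab₀, hb₀⟩
  have ha : v a < lrMax v a := hai.trans_le (apply_le_lrMax v hia.le)
  have hbet : ∀ m, a < m → m < b → v m < v b ∨ v a < v m := fun m ham hmb =>
    Or.inr (lt_of_le_of_ne (not_lt.1 fun h => hmin m ⟨ham, h⟩ hmb) (v.injective.ne ham.ne))
  have hcount := invCount_mul_swap_add_one hab hb hbet
  obtain ⟨w, hw, hw321, hwv⟩ := exists_avoids321_everyRedWordContains (v * swap a b)
  exact ⟨w, hw.trans (lrMax_mul_swap hab ha (hb.trans ha)), hw321,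
    hwv.trans (everyRedWordContains_mul_swap hab hb hbet)⟩
termination_by invCount v
decreasing_by omega

/-- A 312-pattern `i < a < b₀` gives an upward step `v * swap a b`, with `b` the first position
after `a` carrying a value between `v a` and `α_v a`. -/
lemma exists_avoids312_everyRedWordContains (v : Perm (Fin n)) :
    ∃ w, lrMax w = lrMax v ∧ Avoids312 w ∧ EveryRedWordContains v w := by
  by_cases hv : Avoids312 v
  · exact ⟨v, rfl, hv, .refl v⟩
  obtain ⟨i, a, b₀, hia, hab₀, hb₀, hbi⟩ := not_not.1 hv
  obtain ⟨b, ⟨hab, hab', hb⟩, hmin⟩ := wellFounded_lt.has_min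
    {b | a < b ∧ v a < v b ∧ v b < lrMax v a}
    ⟨b₀, hab₀, hb₀, hbi.trans_le (apply_le_lrMax v hia.le)⟩
  obtain ⟨v', hv'⟩ : ∃ v', v' = v * swap a b := ⟨_, rfl⟩
  have hv'a : v' a = v b := by simp [hv']
  have hv'b : v' b = v a := by simp [hv']
  have hv'v : v' * swap a b = v := by simp [hv', mul_assoc]
  have hdesc : v' b < v' a := hv'a ▸ hv'b ▸ hab'
  have hbet : ∀ m, a < m → m < b → v' m < v' b ∨ v' a < v' m := by
    intro m ham hmb
    simp only [hv', Perm.mul_apply, swap_apply_left, swap_apply_right,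
      swap_apply_of_ne_of_ne ham.ne' hmb.ne]
    rcases lt_or_gt_of_ne (v.injective.ne ham.ne') with hma | hma
    · exact Or.inl hma
    · exact Or.inr (hb.trans_le (not_lt.1 fun h => hmin m ⟨ham, hma, h⟩ hmb))
  have hcount : invCount v + 1 = invCount v' := by
    rw [← hv'v]; exact invCount_mul_swap_add_one hab hdesc hbet
  have hbound := invCount_le v'
  obtain ⟨w, hw, hw312, hv'w⟩ := exists_avoids312_everyRedWordContains v'
  have hvv' := everyRedWordContains_mul_swap hab hdesc hbet
  rw [hv'v] at hvv'
  exact ⟨w, hw.trans (hv' ▸ lrMax_mul_swap hab (hab'.trans hb) hb), hw312, hvv'.trans hv'w⟩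
termination_by n * n - invCount v
decreasing_by omega

end Extremal

section Existence
variable {n : ℕ}

lemma exists_first_eq {α : Fin n → Fin n} (hmono : Monotone α) (m : Fin n) :
    ∃ j ≤ m, α j = α m ∧ ∀ q < j, α q < α j := by
  obtain ⟨j, hj, hmin⟩ := wellFounded_lt.has_min {j | α j = α m} ⟨m, rfl⟩
  exact ⟨j, not_lt.1 (hmin m rfl), hj, fun q hq =>
    lt_of_le_of_ne (hmono hq.le) fun h => hmin q (h.trans hj) hq⟩

/-- Hall's theorem gives an injection `f ≤ α` with `f j = α j` at every position `j` where `α`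
strictly increases; by `exists_first_eq` these positions realise every value of `α`. -/
lemma exists_lrMax_eq {α : Fin n → Fin n} (hmono : Monotone α) (hge : ∀ i, i ≤ α i) :
    ∃ w : Perm (Fin n), lrMax w = α := by
  classical
  let t : Fin n → Finset (Fin n) := fun j => if ∀ q < j, α q < α j then {α j} else Iic (α j)
  have ht_jump : ∀ j, (∀ q < j, α q < α j) → t j = {α j} := fun j h => if_pos h
  have ht : ∀ j, t j ⊆ Iic (α j) := fun j => by
    by_cases h : ∀ q < j, α q < α j
    · simp [ht_jump j h]
    · simp [t, if_neg h]
  have hall : ∀ s : Finset (Fin n), #s ≤ #(s.biUnion t) := by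
    intro s
    induction s using Finset.induction_on_max with
    | empty => simp
    | insert a s hlt ih =>
      by_cases hjump : ∀ q < a, α q < α a
      · have hnot : α a ∉ s.biUnion t := by
          simp only [mem_biUnion, not_exists, not_and]
          exact fun x hx hax => (mem_Iic.1 (ht x hax)).not_gt (hjump x (hlt x hx))
        rw [biUnion_insert, card_insert_of_notMem fun h => (hlt a h).false]
        simpa [ht_jump a hjump, card_insert_of_notMem hnot] using ih
      · calc #(insert a s) ≤ #(Iic a) := card_le_card fun x hx => by
              rcases mem_insert.1 hx with rfl | hx
              exacts [mem_Iic.2 le_rfl, mem_Iic.2 (hlt x hx).le]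
          _ ≤ #(Iic (α a)) := by simpa using hge a
          _ ≤ #((insert a s).biUnion t) := card_le_card <| by
              rw [biUnion_insert]
              exact subset_union_left.trans' (by simp [t, if_neg hjump])
  obtain ⟨f, hf, hft⟩ := (all_card_le_biUnion_card_iff_exists_injective t).1 hall
  refine ⟨Equiv.ofBijective f (Finite.injective_iff_bijective.1 hf), funext fun m => ?_⟩
  apply le_antisymm
  · exact sup'_le _ _ fun x hx => (mem_Iic.1 (ht x (hft x))).trans (hmono (mem_Iic.1 hx))
  · obtain ⟨j, hjm, hj, hjump⟩ := exists_first_eq hmono m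
    have hfj : f j = α m := by simpa [ht_jump j hjump, hj] using hft j
    exact hfj ▸ le_sup' (fun k => f k) (mem_Iic.2 hjm)

end Existence

/-- In the fiber `{w : α_w = α}`, the unique 321-avoiding element is
the unique Bruhat-minimal element; the fiber also contains a unique 312-avoiding
element, which is the unique Bruhat-maximal element. -/
theorem stmt_8 (n : ℕ) (α : Fin n → Fin n) (hmono : Monotone α) (hge : ∀ i, i ≤ α i) :
    (∃! w : Equiv.Perm (Fin n), lrMax w = α ∧ Avoids321 w) ∧
    (∀ w : Equiv.Perm (Fin n), lrMax w = α → Avoids321 w →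
      ∀ v : Equiv.Perm (Fin n), lrMax v = α → bruhatLE w v) ∧
    (∃! w : Equiv.Perm (Fin n), lrMax w = α ∧ Avoids312 w) ∧
    (∀ w : Equiv.Perm (Fin n), lrMax w = α → Avoids312 w →
      ∀ v : Equiv.Perm (Fin n), lrMax v = α → bruhatLE v w) := by
  obtain ⟨v₀, hv₀⟩ := exists_lrMax_eq hmono hge
  obtain ⟨w₀, hw₀, hw₀321, -⟩ := exists_avoids321_everyRedWordContains v₀
  obtain ⟨u₀, hu₀, hu₀312, -⟩ := exists_avoids312_everyRedWordContains v₀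
  refine ⟨⟨w₀, ⟨hw₀.trans hv₀, hw₀321⟩, fun w ⟨hw, hw321⟩ =>
      eq_of_avoids321 (hw.trans (hw₀.trans hv₀).symm) hw321 hw₀321⟩, ?_,
    ⟨u₀, ⟨hu₀.trans hv₀, hu₀312⟩, fun u ⟨hu, hu312⟩ =>
      eq_of_avoids312 (hu.trans (hu₀.trans hv₀).symm) hu312 hu₀312⟩, ?_⟩
  · intro w hw hw321 v hv
    obtain ⟨w', hw', hw'321, hw'v⟩ := exists_avoids321_everyRedWordContains v
    rw [eq_of_avoids321 (hw.trans (hw'.trans hv).symm) hw321 hw'321]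
    exact hw'v.bruhatLE
  · intro u hu hu312 v hv
    obtain ⟨u', hu', hu'312, hvu'⟩ := exists_avoids312_everyRedWordContains v
    rw [eq_of_avoids312 (hu.trans (hu'.trans hv).symm) hu312 hu'312]
    exact hvu'.bruhatLE
end
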